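/- Let σ = Σ_{i=0}^L m_i be the index of the weight m. The weighted boundary operator ∂_n maps the submodule Γ_{σ,n}(X) = Ideal_{σ,n}(X) + K_{D,n}(X) into Γ_{σ,n-1}(X); in particular, the boundary of a degenerate singular cube is a sum of degenerate cubes plus σ times a chain. -/

import Mathlib

open scoped BigOperators

noncomputable section

/-- The `n`-dimensional unit cube. -/
abbrev Cube (n : ℕ) : Type := Fin n → unitInterval

/-- The point `i/L` of the unit interval, for `i ∈ {0,…,L}`. -/
def vertexVal (L : ℕ) (i : Fin (L + 1)) : unitInterval :=
  ⟨(i : ℝ) / L, ⟨by positivity,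
    div_le_one_of_le₀ (by exact_mod_cast Fin.is_le i) (Nat.cast_nonneg L)⟩⟩

/-- Insertion of the constant `c` at the `j`-th coordinate. -/
def faceMap {n : ℕ} (j : Fin (n + 1)) (c : unitInterval) : C(Cube n, Cube (n + 1)) :=
  ⟨fun x => j.insertNth c x, (continuous_const : Continuous fun _ : Cube n => c).finInsertNth j continuous_id⟩

/-- The face `⟨T⟩_{n,·,j}` of a singular cube at value `c` in direction `j`. -/
def face {X : Type} [TopologicalSpace X] {n : ℕ} (T : C(Cube (n + 1), X)) (j : Fin (n + 1))
    (c : unitInterval) : C(Cube n, X) :=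
  T.comp (faceMap j c)

/-- The module of cubical `n`-chains: the free `R`-module on the continuous maps `Iⁿ → X`. -/
abbrev Kmod (R : Type) [CommRing R] (X : Type) [TopologicalSpace X] (n : ℕ) : Type :=
  C(Cube n, X) →₀ R

/-- The weighted boundary operator. -/
def bdry (R : Type) [CommRing R] {L : ℕ} (m : Fin (L + 1) → R) (X : Type) [TopologicalSpace X]
    (n : ℕ) : Kmod R X (n + 1) →ₗ[R] Kmod R X n :=
  Finsupp.lift (Kmod R X n) R C(Cube (n + 1), X) fun T =>
    ∑ j : Fin (n + 1), ∑ i : Fin (L + 1),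
      ((-1 : R) ^ (j : ℕ) * m i) • Finsupp.single (face T j (vertexVal L i)) (1 : R)


/-- A singular cube is degenerate if it does not depend on some coordinate. -/
def IsDegenerate {X : Type} [TopologicalSpace X] {n : ℕ} (T : C(Cube n, X)) : Prop :=
  ∃ j : Fin n, ∀ (x : Cube n) (c : unitInterval), T (Function.update x j c) = T x

/-- The submodule of chains generated by degenerate singular cubes. -/
def degChains (R : Type) [CommRing R] (X : Type) [TopologicalSpace X] (n : ℕ) :
    Submodule R (Kmod R X n) :=
  Submodule.span R {u | ∃ T : C(Cube n, X), IsDegenerate T ∧ u = Finsupp.single T 1}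

/-- The submodule of chains all of whose coefficients are multiples of `σ`. -/
def sigmaChains (R : Type) [CommRing R] (X : Type) [TopologicalSpace X] (σ : R) (n : ℕ) :
    Submodule R (Kmod R X n) :=
  LinearMap.range (σ • (LinearMap.id : Kmod R X n →ₗ[R] Kmod R X n))

/-- `Γ_{σ,n}(X) = Ideal_{σ,n}(X) + K_{D,n}(X)`. -/
def GammaMod (R : Type) [CommRing R] (X : Type) [TopologicalSpace X] (σ : R) (n : ℕ) :
    Submodule R (Kmod R X n) :=
  sigmaChains R X σ n ⊔ degChains R X n

/-! The `k`-th face of a cube `T` that does not depend on its `k`-th coordinate is the same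
cube at every height, so the `k`-th summand of `∂ T` is a multiple of `σ`; every other face
of `T` is again degenerate. -/

section DegenerateCube

variable {X : Type} [TopologicalSpace X] {n : ℕ} {T : C(Cube (n + 1), X)} {k : Fin (n + 1)}

theorem face_isDegenerate_of_ne (hk : ∀ (x : Cube (n + 1)) (c : unitInterval),
      T (Function.update x k c) = T x)
    {j : Fin (n + 1)} (hj : j ≠ k) (c : unitInterval) : IsDegenerate (face T j c) := by
  obtain ⟨i, rfl⟩ := Fin.exists_succAbove_eq hj.symm
  exact ⟨i, fun x a => by simpa [face, faceMap, Fin.insertNth_update] using hk _ a⟩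

theorem face_eq_face_of_update_eq (hk : ∀ (x : Cube (n + 1)) (c : unitInterval),
      T (Function.update x k c) = T x)
    (c c' : unitInterval) : face T k c = face T k c' := by
  ext x
  simpa [face, faceMap, Fin.update_insertNth] using hk (k.insertNth c' x) c

end DegenerateCube

section Boundary

variable {R : Type} [CommRing R] {L : ℕ} (m : Fin (L + 1) → R) {X : Type} [TopologicalSpace X]
  {n : ℕ}

theorem bdry_single (T : C(Cube (n + 1), X)) :
    bdry R m X n (Finsupp.single T 1) =
      ∑ j : Fin (n + 1), ∑ i : Fin (L + 1),
        ((-1 : R) ^ (j : ℕ) * m i) • Finsupp.single (face T j (vertexVal L i)) (1 : R) := by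
  simp [bdry]

theorem bdry_single_eq_of_update_eq {T : C(Cube (n + 1), X)} {k : Fin (n + 1)}
    (hk : ∀ (x : Cube (n + 1)) (c : unitInterval), T (Function.update x k c) = T x) :
    bdry R m X n (Finsupp.single T 1) =
      (∑ j ∈ Finset.univ.erase k, ∑ i : Fin (L + 1),
        ((-1 : R) ^ (j : ℕ) * m i) • Finsupp.single (face T j (vertexVal L i)) (1 : R)) +
      (∑ i, m i) • ((-1 : R) ^ (k : ℕ) • Finsupp.single (face T k (vertexVal L 0)) 1) := by
  rw [bdry_single, ← Finset.add_sum_erase _ _ (Finset.mem_univ k), add_comm]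
  congr 1
  simp only [face_eq_face_of_update_eq hk _ (vertexVal L 0), smul_smul, ← Finset.sum_smul,
    ← Finset.mul_sum]
  rw [mul_comm]

theorem exists_bdry_single_eq_of_isDegenerate {T : C(Cube (n + 1), X)} (hT : IsDegenerate T) :
    ∃ d w : Kmod R X n, d ∈ degChains R X n ∧
      bdry R m X n (Finsupp.single T 1) = d + (∑ i, m i) • w := by
  obtain ⟨k, hk⟩ := hT
  refine ⟨_, _, ?_, bdry_single_eq_of_update_eq m hk⟩
  refine Submodule.sum_mem _ fun j hj => Submodule.sum_mem _ fun i _ =>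
    Submodule.smul_mem _ _ (Submodule.subset_span ⟨_, ?_, rfl⟩)
  exact face_isDegenerate_of_ne hk (Finset.ne_of_mem_erase hj) _

theorem smul_mem_sigmaChains (σ : R) (w : Kmod R X n) : σ • w ∈ sigmaChains R X σ n :=
  ⟨w, rfl⟩

theorem bdry_mem_sigmaChains {σ : R} {u : Kmod R X (n + 1)} (hu : u ∈ sigmaChains R X σ (n + 1)) :
    bdry R m X n u ∈ sigmaChains R X σ n := by
  obtain ⟨v, rfl⟩ := hu
  simpa using smul_mem_sigmaChains σ (bdry R m X n v)

theorem bdry_mem_gammaMod_of_mem_degChains {u : Kmod R X (n + 1)} (hu : u ∈ degChains R X (n + 1)) :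
    bdry R m X n u ∈ GammaMod R X (∑ i, m i) n := by
  induction hu using Submodule.span_induction with
  | mem _ hT =>
    obtain ⟨T, hT, rfl⟩ := hT
    obtain ⟨d, w, hd, hbdry⟩ := exists_bdry_single_eq_of_isDegenerate m hT
    rw [hbdry, GammaMod]
    exact add_mem (Submodule.mem_sup_right hd) (Submodule.mem_sup_left (smul_mem_sigmaChains _ w))
  | zero => simp
  | add _ _ _ _ ha hb => simpa using add_mem ha hb
  | smul r _ _ ha => simpa using Submodule.smul_mem _ r ha

end Boundary

/-- The weighted boundary operator maps `Γ_{σ,n}` into `Γ_{σ,n-1}`,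
where `σ = Σ mᵢ`; in particular the boundary of a degenerate singular cube is a sum of
degenerate chains plus `σ` times a chain. -/
theorem bdry_maps_Gamma (R : Type) [CommRing R] (L : ℕ) (m : Fin (L + 1) → R) (X : Type)
    [TopologicalSpace X] (n : ℕ) :
    (∀ u ∈ GammaMod R X (∑ i, m i) (n + 1),
      bdry R m X n u ∈ GammaMod R X (∑ i, m i) n) ∧
    (∀ T : C(Cube (n + 1), X), IsDegenerate T →
      ∃ d w : Kmod R X n, d ∈ degChains R X n ∧
        bdry R m X n (Finsupp.single T 1) = d + (∑ i, m i) • w) := by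
  refine ⟨fun u hu => ?_, fun T hT => exists_bdry_single_eq_of_isDegenerate m hT⟩
  obtain ⟨y, hy, z, hz, rfl⟩ := Submodule.mem_sup.mp (by rwa [GammaMod] at hu)
  rw [map_add]
  exact add_mem (Submodule.mem_sup_left (bdry_mem_sigmaChains m hy))
    (bdry_mem_gammaMod_of_mem_degChains m hz)
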